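/- arXiv:1805.08421 — 3 statements merged into one kernel-verified Lean document; each statement's English description precedes it below -/
import Mathlib

section
/- Let α₁, α₂ ∈ ℂ with α₁ ≠ α₂, α₁α₂ ≠ 0, and N ≥ 2. If z ∈ ℂ is a common root of f_{α₁}(z) = ∑_{i=0}^{N−1} α₁^i z^i and f_{α₂}(z) = ∑_{i=0}^{N−1} α₂^i z^i, then z ≠ 0, (α₁ z)^N = (α₂ z)^N = 1, and (α₁/α₂)^N = 1 with α₁/α₂ ≠ 1; in particular α₁/α₂ is a nontrivial N-th root of unity. -/
/-! `f_α(z)` is the geometric sum `∑ (αz)^i`, and `(αz - 1) f_α(z) = (αz)^N - 1`, so a common root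
makes `α₁z` and `α₂z` both `N`-th roots of unity; their quotient `α₁/α₂` is then one as well. -/

open Finset

theorem pow_eq_one_of_geom_sum_eq_zero {R : Type*} [Ring R] {x : R} {n : ℕ}
    (h : ∑ i ∈ range n, x ^ i = 0) : x ^ n = 1 :=
  sub_eq_zero.mp (by rw [← geom_sum_mul, h, zero_mul])

theorem div_pow_eq_one_of_mul_pow_eq_one {K : Type*} [Field K] {a b z : K} {n : ℕ}
    (ha : (a * z) ^ n = 1) (hb : (b * z) ^ n = 1) : (a / b) ^ n = 1 := by
  rw [mul_pow] at ha hb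
  have hzn : z ^ n ≠ 0 := right_ne_zero_of_mul_eq_one hb
  have hbn : b ^ n ≠ 0 := left_ne_zero_of_mul_eq_one hb
  rw [div_pow, div_eq_one_iff_eq hbn]
  exact mul_right_cancel₀ hzn (ha.trans hb.symm)

theorem common_root_ratio_root_of_unity_general (N : ℕ) (hN : 2 ≤ N) (α₁ α₂ : ℂ)
    (hne : α₁ ≠ α₂) (z : ℂ)
    (h1 : (∑ i : Fin N, α₁ ^ (i : ℕ) * z ^ (i : ℕ)) = 0)
    (h2 : (∑ i : Fin N, α₂ ^ (i : ℕ) * z ^ (i : ℕ)) = 0) :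
    z ≠ 0 ∧ (α₁ * z) ^ N = 1 ∧ (α₂ * z) ^ N = 1 ∧ (α₁ / α₂) ^ N = 1 ∧ α₁ / α₂ ≠ 1 := by
  have mul_pow_eq_one {α : ℂ} (h : ∑ i : Fin N, α ^ (i : ℕ) * z ^ (i : ℕ) = 0) :
      (α * z) ^ N = 1 := by
    simp only [← mul_pow] at h
    exact pow_eq_one_of_geom_sum_eq_zero ((Fin.sum_univ_eq_sum_range _ N).symm.trans h)
  have hα₁z := mul_pow_eq_one h1
  have hα₂z := mul_pow_eq_one h2
  have hα₂z_ne : α₂ * z ≠ 0 := (IsUnit.of_pow_eq_one hα₂z (by omega)).ne_zero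
  refine ⟨right_ne_zero_of_mul hα₂z_ne, hα₁z, hα₂z,
    div_pow_eq_one_of_mul_pow_eq_one hα₁z hα₂z, ?_⟩
  rwa [Ne, div_eq_one_iff_eq (left_ne_zero_of_mul hα₂z_ne)]

/-- A common root of two steering-vector polynomials forces the ratio of the generators
to be a nontrivial `N`-th root of unity. -/
theorem common_root_ratio_root_of_unity (N : ℕ) (hN : 2 ≤ N) (α₁ α₂ : ℂ)
    (hne : α₁ ≠ α₂) (hprod : α₁ * α₂ ≠ 0) (z : ℂ)
    (h1 : (∑ i : Fin N, α₁ ^ (i : ℕ) * z ^ (i : ℕ)) = 0)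
    (h2 : (∑ i : Fin N, α₂ ^ (i : ℕ) * z ^ (i : ℕ)) = 0) :
    z ≠ 0 ∧ (α₁ * z) ^ N = 1 ∧ (α₂ * z) ^ N = 1 ∧ (α₁ / α₂) ^ N = 1 ∧ α₁ / α₂ ≠ 1 :=
  common_root_ratio_root_of_unity_general N hN α₁ α₂ hne z h1 h2
end

section
/- Let f₁, …, f_M ∈ ℂ[z], each of degree at most N−1 with coefficient vectors in ℂ^N, and fix α ∈ ℂ. The minimum of ∑_{m=1}^{M} ∑_{i=0}^{N−1} |λ_{m,i}|² over all perturbations λ_m ∈ ℂ^N such that each perturbed polynomial f̂_m(z) = ∑_i (f_{m,i} + λ_{m,i}) z^i vanishes at α, equals (∑_{m=1}^{M} |f_m(α)|²) / (∑_{k=0}^{N−1} |α|^{2k}). -/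
/-!
For a single polynomial the constraint is one linear equation `∑ i, λᵢ aᵢ = -f(α)` with
`aᵢ = αⁱ`. By Cauchy–Schwarz `|f(α)|² ≤ (∑ |λᵢ|²) (∑ |aᵢ|²)`, with equality for `λ` proportional
to `ā`. The constraints for different polynomials involve disjoint coordinates, so the minima add.
-/

open Complex Finset

section MinNormRoot

variable {𝕜 ι : Type*} [RCLike 𝕜] [Fintype ι]

open RCLike ComplexConjugate

theorem norm_sum_mul_sq_le (l a : ι → 𝕜) :
    ‖∑ i, l i * a i‖ ^ 2 ≤ (∑ i, ‖l i‖ ^ 2) * ∑ i, ‖a i‖ ^ 2 :=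
  calc ‖∑ i, l i * a i‖ ^ 2 ≤ (∑ i, ‖l i‖ * ‖a i‖) ^ 2 := by
        gcongr
        simpa only [norm_mul] using norm_sum_le univ fun i => l i * a i
    _ ≤ _ := sum_mul_sq_le_sq_mul_sq _ _ _

theorem sum_conj_mul_self (a : ι → 𝕜) :
    ∑ i, conj (a i) * a i = ((∑ i, ‖a i‖ ^ 2 : ℝ) : 𝕜) := by
  push_cast
  exact sum_congr rfl fun i _ => conj_mul (a i)

theorem eq_zero_of_sum_norm_sq_eq_zero {a : ι → 𝕜} (h : ∑ i, ‖a i‖ ^ 2 = 0) (i : ι) :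
    a i = 0 := by
  rw [sum_eq_zero_iff_of_nonneg fun i _ => by positivity] at h
  simpa using h i (mem_univ i)

/-- The minimum-norm solution of `∑ i, l i * a i = -c`; it is `0` when `a = 0`. -/
noncomputable def minNormCorrection (a : ι → 𝕜) (c : 𝕜) (i : ι) : 𝕜 :=
  -conj (a i) * c / ((∑ j, ‖a j‖ ^ 2 : ℝ) : 𝕜)

theorem sum_minNormCorrection_mul (f a : ι → 𝕜) :
    ∑ i, (f i + minNormCorrection a (∑ j, f j * a j) i) * a i = 0 := by
  by_cases hS : ∑ i, ‖a i‖ ^ 2 = 0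
  · simp [eq_zero_of_sum_norm_sq_eq_zero hS]
  have hS' : ((∑ i, ‖a i‖ ^ 2 : ℝ) : 𝕜) ≠ 0 := ofReal_ne_zero.mpr hS
  calc ∑ i, (f i + minNormCorrection a (∑ j, f j * a j) i) * a i
      = ∑ i, f i * a i - (∑ i, conj (a i) * a i) * (∑ j, f j * a j) /
          ((∑ j, ‖a j‖ ^ 2 : ℝ) : 𝕜) := by
        simp only [minNormCorrection, add_mul, sum_add_distrib, sum_mul, sum_div,
          sub_eq_add_neg, ← sum_neg_distrib]
        exact congrArg _ (sum_congr rfl fun i _ => by ring)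
    _ = 0 := by rw [sum_conj_mul_self, mul_div_cancel_left₀ _ hS', sub_self]

theorem sum_norm_minNormCorrection_sq (a : ι → 𝕜) (c : 𝕜) :
    ∑ i, ‖minNormCorrection a c i‖ ^ 2 = ‖c‖ ^ 2 / ∑ i, ‖a i‖ ^ 2 := by
  have hS : 0 ≤ ∑ i, ‖a i‖ ^ 2 := by positivity
  simp only [minNormCorrection, norm_div, norm_mul, norm_neg, RCLike.norm_conj,
    RCLike.norm_ofReal, abs_of_nonneg hS, div_pow, mul_pow, ← sum_div, ← sum_mul]
  rcases hS.eq_or_lt with hS0 | hS0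
  · simp [← hS0]
  · field_simp

theorem isLeast_sum_norm_sq_of_sum_mul_eq_zero (f a : ι → 𝕜) :
    IsLeast {s : ℝ | ∃ l : ι → 𝕜, ∑ i, (f i + l i) * a i = 0 ∧ s = ∑ i, ‖l i‖ ^ 2}
      (‖∑ i, f i * a i‖ ^ 2 / ∑ i, ‖a i‖ ^ 2) := by
  refine ⟨⟨_, sum_minNormCorrection_mul f a, (sum_norm_minNormCorrection_sq _ _).symm⟩, ?_⟩
  rintro s ⟨l, hl, rfl⟩
  have hc : ∑ i, f i * a i = -∑ i, l i * a i := by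
    simpa only [add_mul, sum_add_distrib, add_eq_zero_iff_eq_neg] using hl
  rw [hc, norm_neg]
  exact div_le_of_le_mul₀ (by positivity) (by positivity) (norm_sum_mul_sq_le l a)

end MinNormRoot

theorem IsLeast.pi_sum {κ : Type*} [Fintype κ] {L : κ → Type*} {C : ∀ m, L m → Prop}
    {g : ∀ m, L m → ℝ} {x : κ → ℝ} (h : ∀ m, IsLeast {s | ∃ l, C m l ∧ s = g m l} (x m)) :
    IsLeast {s | ∃ l : ∀ m, L m, (∀ m, C m (l m)) ∧ s = ∑ m, g m (l m)} (∑ m, x m) := by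
  choose l hl hx using fun m => (h m).1
  refine ⟨⟨l, hl, by simp only [hx]⟩, ?_⟩
  rintro s ⟨l', hl', rfl⟩
  exact sum_le_sum fun m _ => (h m).2 ⟨l' m, hl' m, rfl⟩

theorem nearest_common_root_perturbation_general (N M : ℕ)
    (f : Fin M → Fin N → ℂ) (α : ℂ) :
    IsLeast
      {s : ℝ | ∃ l : Fin M → Fin N → ℂ,
        (∀ m : Fin M, (∑ i : Fin N, (f m i + l m i) * α ^ (i : ℕ)) = 0) ∧
        s = ∑ m : Fin M, ∑ i : Fin N, ‖l m i‖ ^ 2}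
      ((∑ m : Fin M, ‖∑ i : Fin N, f m i * α ^ (i : ℕ)‖ ^ 2) /
        ∑ k : Fin N, ‖α‖ ^ (2 * (k : ℕ))) := by
  have hpow : ∀ k : ℕ, ‖α‖ ^ (2 * k) = ‖α ^ k‖ ^ 2 := fun k => by
    rw [norm_pow, ← pow_mul, mul_comm]
  simp only [hpow, sum_div]
  exact IsLeast.pi_sum fun m => isLeast_sum_norm_sq_of_sum_mul_eq_zero (f m) _

/-- Theorem 1 (multi-polynomial version): the minimal total coefficient perturbation
forcing `α` to be a common root of `M` polynomials equals
`(∑_m |f_m(α)|²) / (∑_{k<N} |α|^{2k})`. -/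
theorem nearest_common_root_perturbation (N M : ℕ) (hN : 1 ≤ N)
    (f : Fin M → Fin N → ℂ) (α : ℂ) :
    IsLeast
      {s : ℝ | ∃ l : Fin M → Fin N → ℂ,
        (∀ m : Fin M, (∑ i : Fin N, (f m i + l m i) * α ^ (i : ℕ)) = 0) ∧
        s = ∑ m : Fin M, ∑ i : Fin N, ‖l m i‖ ^ 2}
      ((∑ m : Fin M, ‖∑ i : Fin N, f m i * α ^ (i : ℕ)‖ ^ 2) /
        ∑ k : Fin N, ‖α‖ ^ (2 * (k : ℕ))) :=
  nearest_common_root_perturbation_general N M f α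
end

section
/- Let u, ũ ∈ ℂ[x] be monic polynomials of the same degree n whose roots can be listed as α₁,…,α_n and α̃₁,…,α̃_n (with multiplicity) such that |α_i − α̃_i| ≤ δ for all i, with δ ≥ 0 and |α_i| ≤ 1 for all i. Then for each coefficient index k, |u_k − ũ_k| ≤ C(n,k) · ((1+δ)^n − 1) for the binomial-type constant C(n,k) = binom(n,k); in particular the ℓ∞-distance of the coefficient vectors is at most max_k binom(n,k) · ((1+δ)^n − 1). -/
/-!
Up to the sign absorbed by negating the roots, the `k`-th coefficient of `∏ (X - C xᵢ)` is a sum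
of `binom(n, k)` products of `n - k` roots (Vieta). Two such products differ by at most
`(1 + δ) ^ (n - k) - 1`, by induction on the number of factors through
`x P - y Q = x (P - Q) + (x - y) Q`, with `‖P‖ ≤ 1` and hence `‖Q‖ ≤ 1 + ‖P - Q‖`.
-/

open Polynomial Finset

theorem coeff_prod_X_sub_C_eq_sum_powersetCard {ι R : Type*} [CommRing R] (s : Finset ι)
    (x : ι → R) {k : ℕ} (hk : k ≤ #s) :
    (∏ i ∈ s, (X - C (x i))).coeff k = ∑ t ∈ s.powersetCard (#s - k), ∏ i ∈ t, -x i := by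
  simp_rw [sub_eq_add_neg, ← map_neg C]
  exact s.prod_X_add_C_coeff _ hk

section

variable {ι R : Type*} [NormedCommRing R] [NormOneClass R]

theorem norm_prod_sub_prod_le_one_add_pow_sub_one {s : Finset ι} {x y : ι → R} {δ : ℝ}
    (hx : ∀ i ∈ s, ‖x i‖ ≤ 1) (hxy : ∀ i ∈ s, ‖x i - y i‖ ≤ δ) :
    ‖∏ i ∈ s, x i - ∏ i ∈ s, y i‖ ≤ (1 + δ) ^ #s - 1 := by
  classical
  induction s using Finset.induction_on with
  | empty => simp
  | insert a s ha ih =>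
    simp only [forall_mem_insert] at hx hxy
    have hδ : 0 ≤ δ := (norm_nonneg _).trans hxy.1
    have hdiff := ih hx.2 hxy.2
    have hPx : ‖∏ i ∈ s, x i‖ ≤ 1 :=
      (Finset.norm_prod_le _ _).trans (prod_le_one (fun _ _ ↦ norm_nonneg _) hx.2)
    have hPy : ‖∏ i ∈ s, y i‖ ≤ (1 + δ) ^ #s := by
      linarith [norm_le_norm_add_norm_sub (∏ i ∈ s, x i) (∏ i ∈ s, y i)]
    rw [prod_insert ha, prod_insert ha, card_insert_of_notMem ha]
    calc ‖x a * ∏ i ∈ s, x i - y a * ∏ i ∈ s, y i‖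
        = ‖x a * (∏ i ∈ s, x i - ∏ i ∈ s, y i) + (x a - y a) * ∏ i ∈ s, y i‖ := by ring_nf
      _ ≤ ‖x a‖ * ‖∏ i ∈ s, x i - ∏ i ∈ s, y i‖ + ‖x a - y a‖ * ‖∏ i ∈ s, y i‖ :=
        (norm_add_le _ _).trans (add_le_add (norm_mul_le _ _) (norm_mul_le _ _))
      _ ≤ 1 * ((1 + δ) ^ #s - 1) + δ * (1 + δ) ^ #s := by
        gcongr
        · exact hx.1
        · exact hxy.1
      _ = (1 + δ) ^ (#s + 1) - 1 := by ring

theorem norm_coeff_prod_X_sub_C_sub_le {s : Finset ι} {x y : ι → R} {δ : ℝ}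
    (hx : ∀ i ∈ s, ‖x i‖ ≤ 1) (hxy : ∀ i ∈ s, ‖x i - y i‖ ≤ δ) (k : ℕ) :
    ‖(∏ i ∈ s, (X - C (x i))).coeff k - (∏ i ∈ s, (X - C (y i))).coeff k‖
      ≤ (#s).choose k * ((1 + δ) ^ (#s - k) - 1) := by
  rcases lt_or_ge #s k with hk | hk
  · have : Nontrivial R := NormOneClass.nontrivial
    have hdeg (z : ι → R) : (∏ i ∈ s, (X - C (z i))).natDegree < k :=
      (natDegree_finsetProd_X_sub_C_eq_card s z).trans_lt hk
    rw [coeff_eq_zero_of_natDegree_lt (hdeg x), coeff_eq_zero_of_natDegree_lt (hdeg y),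
      Nat.choose_eq_zero_of_lt hk]
    simp
  rw [coeff_prod_X_sub_C_eq_sum_powersetCard s x hk,
    coeff_prod_X_sub_C_eq_sum_powersetCard s y hk, ← sum_sub_distrib, ← Nat.choose_symm hk,
    ← card_powersetCard]
  calc ‖∑ t ∈ s.powersetCard (#s - k), (∏ i ∈ t, -x i - ∏ i ∈ t, -y i)‖
      ≤ ∑ t ∈ s.powersetCard (#s - k), ((1 + δ) ^ (#s - k) - 1) := by
        refine norm_sum_le_of_le _ fun t ht ↦ ?_
        obtain ⟨hts, hcard⟩ := mem_powersetCard.mp ht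
        rw [← hcard]
        refine norm_prod_sub_prod_le_one_add_pow_sub_one (fun i hi ↦ ?_) (fun i hi ↦ ?_)
        · simpa using hx i (hts hi)
        · rw [neg_sub_neg, norm_sub_rev]
          exact hxy i (hts hi)
    _ = _ := by rw [sum_const, nsmul_eq_mul]

end

/-- Coefficient perturbation bound: if the roots of two monic degree-`n` polynomials are
pairwise within `δ` and lie (for `u`) in the closed unit disk, then each coefficient
moves by at most `binom(n,k)·((1+δ)^n − 1)`. -/
theorem coeff_perturbation_bound (n : ℕ) (δ : ℝ) (hδ : 0 ≤ δ)
    (α β : Fin n → ℂ) (hα : ∀ i, ‖α i‖ ≤ 1)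
    (hclose : ∀ i, ‖α i - β i‖ ≤ δ) :
    ∀ k : ℕ,
      ‖(∏ i : Fin n, (X - C (α i))).coeff k -
          (∏ i : Fin n, (X - C (β i))).coeff k‖
        ≤ (n.choose k : ℝ) * ((1 + δ) ^ n - 1) := by
  intro k
  have hcoeff :=
    norm_coeff_prod_X_sub_C_sub_le (s := univ) (fun i _ ↦ hα i) (fun i _ ↦ hclose i) k
  rw [card_univ, Fintype.card_fin] at hcoeff
  refine hcoeff.trans (mul_le_mul_of_nonneg_left ?_ (Nat.cast_nonneg _))
  gcongr
  · linarith
  · omega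
end
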